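/- Let E be a 2-coloured graph and let C be a complete collection of squares in E. If μ : E_{2,m} → E and ν : E_{2,n} → E are C-compatible coloured-graph morphisms such that s(μ) = r(ν), then there exists a unique C-compatible coloured-graph morphism μν : E_{2,m+n} → E such that (μν)|_{E_{2,m}} = μ and (μν)|*_{E_{2,[m,m+n]}} = ν. -/

import Mathlib

/-- A 2-coloured graph: a directed graph `(E⁰, E¹, r, s)` together with a colour map
`c : E¹ → Bool` (`false` is the colour `c₁`, `true` the colour `c₂`). -/
structure TwoColouredGraph where
  V : Type
  Edge : Type
  r : Edge → V
  s : Edge → V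
  c : Edge → Bool

/-- A coloured-graph morphism: a graph morphism preserving colours. -/
structure CGMor (F E : TwoColouredGraph) where
  onV : F.V → E.V
  onE : F.Edge → E.Edge
  map_r : ∀ e, E.r (onE e) = onV (F.r e)
  map_s : ∀ e, E.s (onE e) = onV (F.s e)
  map_c : ∀ e, E.c (onE e) = F.c e

/-- `x` is a path (finite sequence of composable edges) with range `v`;
vertices are regarded as the paths of length 0. -/
def IsPathFrom (E : TwoColouredGraph) (v : E.V) (x : List E.Edge) : Prop :=
  (∀ e ∈ x.head?, E.r e = v) ∧ List.Chain' (fun e f => E.s e = E.r f) x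

/-- The standard basis vectors `e₁, e₂` of `ℕ²`, indexed by colour. -/
def vec : Bool → ℕ × ℕ
  | false => (1, 0)
  | true => (0, 1)

theorem le_add_vec (p : ℕ × ℕ) (i : Bool) : p ≤ p + vec i :=
  Prod.le_def.mpr ⟨Nat.le_add_right _ _, Nat.le_add_right _ _⟩

theorem zero_le2 (p : ℕ × ℕ) : (0 : ℕ × ℕ) ≤ p :=
  Prod.le_def.mpr ⟨Nat.zero_le _, Nat.zero_le _⟩

theorem le_self_add2 (p q : ℕ × ℕ) : p ≤ p + q :=
  Prod.le_def.mpr ⟨Nat.le_add_right _ _, Nat.le_add_right _ _⟩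

/-- The model 2-coloured graph `E_{2,m}`: vertices `{n ∈ ℕ² : n ≤ m}` and, whenever
`n, n + eᵢ ≤ m`, an edge `n + vᵢ` of colour `i` from `n + eᵢ` to `n`. -/
def model2 (m : ℕ × ℕ) : TwoColouredGraph where
  V := {n : ℕ × ℕ // n ≤ m}
  Edge := {p : (ℕ × ℕ) × Bool // p.1 + vec p.2 ≤ m}
  r e := ⟨e.1.1, (le_add_vec e.1.1 e.1.2).trans e.2⟩
  s e := ⟨e.1.1 + vec e.1.2, e.2⟩
  c e := e.1.2

/-- The degree `d*(x) ∈ ℕ²` of a path: the vector counting the edges of each colour. -/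
def deg2 (E : TwoColouredGraph) (x : List E.Edge) : ℕ × ℕ :=
  (x.map fun e => vec (E.c e)).sum

theorem deg2_take_add_drop (E : TwoColouredGraph) (x : List E.Edge) (n : ℕ) :
    deg2 E (x.take n) + deg2 E (x.drop n) = deg2 E x := by
  unfold deg2
  rw [← List.sum_append, ← List.map_append, List.take_append_drop]

theorem deg2_take_le (E : TwoColouredGraph) (x : List E.Edge) (n : ℕ) :
    deg2 E (x.take n) ≤ deg2 E x :=
  (le_self_add2 _ _).trans_eq (deg2_take_add_drop E x n)

theorem deg2_take_add_vec_le (E : TwoColouredGraph) (x : List E.Edge) (n : ℕ)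
    (hn : n < x.length) :
    deg2 E (x.take n) + vec (E.c (x.get ⟨n, hn⟩)) ≤ deg2 E x := by
  have hdrop : deg2 E (x.drop n) = vec (E.c (x.get ⟨n, hn⟩)) + deg2 E (x.drop (n + 1)) := by
    rw [deg2, deg2, List.drop_eq_getElem_cons hn, List.map_cons, List.sum_cons,
      List.get_eq_getElem]
  calc deg2 E (x.take n) + vec (E.c (x.get ⟨n, hn⟩))
      ≤ deg2 E (x.take n) + (vec (E.c (x.get ⟨n, hn⟩)) + deg2 E (x.drop (n + 1))) := by
        rw [← add_assoc]; exact le_self_add2 _ _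
    _ = deg2 E x := by rw [← hdrop, deg2_take_add_drop]

/-- `x` (a path with range `v`) traverses the coloured-graph morphism `λ : E_{2,m} → E`. -/
def Traverses2 (E : TwoColouredGraph) {m : ℕ × ℕ} (lam : CGMor (model2 m) E)
    (v : E.V) (x : List E.Edge) : Prop :=
  ∃ hd : deg2 E x = m,
    lam.onV ⟨0, zero_le2 m⟩ = v ∧
    ∀ (n : ℕ) (hn : n < x.length),
      lam.onE ⟨(deg2 E (x.take n), E.c (x.get ⟨n, hn⟩)),
        hd ▸ deg2_take_add_vec_le E x n hn⟩ = x.get ⟨n, hn⟩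

/-- A square in `E`: a coloured-graph morphism `φ : E_{2,e₁+e₂} → E`. -/
abbrev Square2 (E : TwoColouredGraph) := CGMor (model2 (1, 1)) E

/-- The edge `vᵢ` of `E_{2,e₁+e₂}` with range `0`, of colour `i`. -/
def sqEdge0 (i : Bool) : (model2 (1, 1)).Edge :=
  ⟨((0, 0), i), by cases i <;> decide⟩

/-- The edge `eᵢ + vⱼ` of `E_{2,e₁+e₂}` with range `eᵢ`, of the other colour `j = ¬i`. -/
def sqEdge1 (i : Bool) : (model2 (1, 1)).Edge :=
  ⟨(vec i, !i), by cases i <;> decide⟩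

/-- A collection `C` of squares in `E` is complete if each two-coloured path of length 2 in `E`
factors through a unique square in `C`. -/
def IsComplete2 (E : TwoColouredGraph) (C : Set (Square2 E)) : Prop :=
  ∀ x₁ x₂ : E.Edge, E.s x₁ = E.r x₂ → E.c x₁ ≠ E.c x₂ →
    ∃! φ : Square2 E, φ ∈ C ∧ x₁ = φ.onE (sqEdge0 (E.c x₁)) ∧ x₂ = φ.onE (sqEdge1 (E.c x₁))

theorem occ_vertex_le {z n m : ℕ × ℕ} (hz : z ≤ (1, 1)) (h : n + (1, 1) ≤ m) : z + n ≤ m :=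
  le_trans (add_le_add_left hz n) (le_of_eq (add_comm _ _) |>.trans h)

theorem occ_edge_le {u n m : ℕ × ℕ} {i : Bool} (hz : u + vec i ≤ (1, 1))
    (h : n + (1, 1) ≤ m) : (u + n) + vec i ≤ m := by
  rw [add_right_comm]
  exact occ_vertex_le hz h

/-- The square `φ` occurs in `λ : E_{2,m} → E` if `φ` is the translation of `λ` by some
`n ∈ ℕ²`, i.e. `φ(x) = λ(x + n)` on vertices and edges. -/
def Occurs2 {E : TwoColouredGraph} {m : ℕ × ℕ} (φ : Square2 E)
    (lam : CGMor (model2 m) E) : Prop :=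
  ∃ (n : ℕ × ℕ) (h : n + (1, 1) ≤ m),
    (∀ z : (model2 (1, 1)).V, lam.onV ⟨z.1 + n, occ_vertex_le z.2 h⟩ = φ.onV z) ∧
    (∀ e : (model2 (1, 1)).Edge,
      lam.onE ⟨(e.1.1 + n, e.1.2), occ_edge_le e.2 h⟩ = φ.onE e)

/-- `λ` is `C`-compatible if every square occurring in `λ` belongs to `C`. -/
def Compatible2 {E : TwoColouredGraph} (C : Set (Square2 E)) {m : ℕ × ℕ}
    (lam : CGMor (model2 m) E) : Prop :=
  ∀ φ : Square2 E, Occurs2 φ lam → φ ∈ C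

/-- The restriction `λ|_{E_{2,p}}` of `λ : E_{2,q} → E` for `p ≤ q`. -/
def restrict2 {E : TwoColouredGraph} {q : ℕ × ℕ} (lam : CGMor (model2 q) E)
    (p : ℕ × ℕ) (h : p ≤ q) : CGMor (model2 p) E where
  onV z := lam.onV ⟨z.1, z.2.trans h⟩
  onE e := lam.onE ⟨e.1, e.2.trans h⟩
  map_r e := lam.map_r _
  map_s e := lam.map_s _
  map_c e := lam.map_c _

/-- The translated restriction `λ|*_{E_{2,[p,p+n]}} : E_{2,n} → E`, `a ↦ λ(p + a)`,
of `λ : E_{2,q} → E` where `p + n ≤ q`. -/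
def starRestrict2 {E : TwoColouredGraph} {q : ℕ × ℕ} (lam : CGMor (model2 q) E)
    (p n : ℕ × ℕ) (h : p + n ≤ q) : CGMor (model2 n) E where
  onV z := lam.onV ⟨p + z.1, (add_le_add_right z.2 p).trans h⟩
  onE e := lam.onE ⟨(p + e.1.1, e.1.2), by
    rw [add_assoc]; exact (add_le_add_right e.2 p).trans h⟩
  map_r e := lam.map_r _
  map_s e := by
    exact (lam.map_s _).trans
      (congrArg lam.onV (Subtype.ext (add_assoc p e.1.1 (vec e.1.2))))
  map_c e := lam.map_c _

/-- The model graph `E_{2,0}` has no edges. -/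
theorem model2_zero_no_edge (e : (model2 (0, 0)).Edge) : False := by
  obtain ⟨⟨u, i⟩, h⟩ := e
  rw [Prod.le_def] at h
  cases i <;> simp [vec] at h

/-- The identity morphism `λ_v : E_{2,0} → E`, `λ_v(0) = v`. -/
def idMor2 (E : TwoColouredGraph) (v : E.V) : CGMor (model2 (0, 0)) E where
  onV _ := v
  onE e := (model2_zero_no_edge e).elim
  map_r e := (model2_zero_no_edge e).elim
  map_s e := (model2_zero_no_edge e).elim
  map_c e := (model2_zero_no_edge e).elim

theorem idMor2_compatible (E : TwoColouredGraph) (C : Set (Square2 E)) (v : E.V) :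
    Compatible2 C (idMor2 E v) := by
  rintro φ ⟨n, h, -, -⟩
  exact absurd h.2 (by simp)

/-- The set `Λ = ⋃_{m ∈ ℕ²} Λ^m` of all `C`-compatible coloured-graph morphisms into `E`. -/
def Lam2 (E : TwoColouredGraph) (C : Set (Square2 E)) : Type :=
  Σ m : ℕ × ℕ, {lam : CGMor (model2 m) E // Compatible2 C lam}

/-- The degree `d(λ) = m` of `λ : E_{2,m} → E`. -/
def Lam2.deg {E : TwoColouredGraph} {C : Set (Square2 E)} (α : Lam2 E C) : ℕ × ℕ := α.1

/-- The range `r(λ) = λ(0)`. -/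
def Lam2.rV {E : TwoColouredGraph} {C : Set (Square2 E)} (α : Lam2 E C) : E.V :=
  α.2.1.onV ⟨0, zero_le2 α.1⟩

/-- The source `s(λ) = λ(d(λ))`. -/
def Lam2.sV {E : TwoColouredGraph} {C : Set (Square2 E)} (α : Lam2 E C) : E.V :=
  α.2.1.onV ⟨α.1, le_refl α.1⟩

/-- The identity `λ_v` as an element of `Λ`. -/
def idLam2 (E : TwoColouredGraph) (C : Set (Square2 E)) (v : E.V) : Lam2 E C :=
  ⟨(0, 0), idMor2 E v, idMor2_compatible E C v⟩

/-- `γ` is the composition `μν`, i.e. `d(γ) = d(μ) + d(ν)`, `γ|_{E_{2,d(μ)}} = μ` and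
`γ|*_{E_{2,[d(μ), d(μ)+d(ν)]}} = ν`. -/
def IsComp2 {E : TwoColouredGraph} {C : Set (Square2 E)} (α β γ : Lam2 E C) : Prop :=
  ∃ h : γ.1 = α.1 + β.1,
    restrict2 γ.2.1 α.1 ((le_self_add2 α.1 β.1).trans_eq h.symm) = α.2.1 ∧
    starRestrict2 γ.2.1 α.1 β.1 h.ge = β.2.1

/-!
Composition is built by appending the edges of `ν` one at a time. Appending an edge `g` of
colour `i` at the corner `p` of `λ` forces a strip of unit squares along the far side of `λ`:
working down from `g`, completeness of `C` gives exactly one square in `C` whose path is the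
side edge of `λ` followed by the strip edge already known above it. Concretely, the strip is a
square glued on top of a shorter strip, and the extension is `λ` glued to the strip; a morphism
of `E_{2,M}` is determined by its restrictions to two boxes that cover every unit square of `M`,
and it is `C`-compatible as soon as those restrictions are.
-/

section

variable {E : TwoColouredGraph} {C : Set (Square2 E)}

@[ext]
theorem CGMor.ext {F : TwoColouredGraph} {f g : CGMor F E} (hV : ∀ v, f.onV v = g.onV v)
    (hE : ∀ e, f.onE e = g.onE e) : f = g := by
  cases f; cases g
  congr
  exacts [funext hV, funext hE]

namespace CGMor

variable {m : ℕ × ℕ} (f : CGMor (model2 m) E)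

theorem onV_congr {z z' : ℕ × ℕ} (h : z = z') (hz : z ≤ m) (hz' : z' ≤ m) :
    f.onV ⟨z, hz⟩ = f.onV ⟨z', hz'⟩ := by
  subst h; rfl

theorem onE_congr {z z' : ℕ × ℕ} {b b' : Bool} (h : z = z') (hb : b = b')
    (hz : z + vec b ≤ m) (hz' : z' + vec b' ≤ m) :
    f.onE ⟨(z, b), hz⟩ = f.onE ⟨(z', b'), hz'⟩ := by
  subst h hb; rfl

theorem starRestrict2_onV_tsub {s q : ℕ × ℕ} (hsq : s + q ≤ m) {z : ℕ × ℕ} (hs : s ≤ z)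
    (hz : z - s ≤ q) (hz' : z ≤ m) :
    (starRestrict2 f s q hsq).onV ⟨z - s, hz⟩ = f.onV ⟨z, hz'⟩ :=
  f.onV_congr (add_tsub_cancel_of_le hs) _ _

theorem starRestrict2_onE_tsub {s q : ℕ × ℕ} (hsq : s + q ≤ m) {z : ℕ × ℕ} {b : Bool}
    (hs : s ≤ z) (hz : z - s + vec b ≤ q) (hz' : z + vec b ≤ m) :
    (starRestrict2 f s q hsq).onE ⟨(z - s, b), hz⟩ = f.onE ⟨(z, b), hz'⟩ :=
  f.onE_congr (add_tsub_cancel_of_le hs) rfl _ _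

end CGMor

theorem model2_exists_edge_adjacent {m : ℕ × ℕ} (hm : m ≠ 0) (z : (model2 m).V) :
    ∃ e, (model2 m).r e = z ∨ (model2 m).s e = z := by
  obtain ⟨⟨a, b⟩, hz⟩ := z
  obtain ⟨m₁, m₂⟩ := m
  simp only [Prod.mk_le_mk] at hz
  by_cases ha : a < m₁
  · exact ⟨⟨((a, b), false), by simp [vec]; omega⟩, Or.inl rfl⟩
  by_cases hb : b < m₂
  · exact ⟨⟨((a, b), true), by simp [vec]; omega⟩, Or.inl rfl⟩
  by_cases h₁ : 0 < m₁
  · exact ⟨⟨((a - 1, b), false), by simp [vec]; omega⟩,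
      Or.inr (Subtype.ext (by simp [model2, vec]; omega))⟩
  · have h₂ : 0 < m₂ := by
      by_contra
      exact hm (by simp only [Prod.mk_eq_zero]; omega)
    exact ⟨⟨((a, b - 1), true), by simp [vec]; omega⟩,
      Or.inr (Subtype.ext (by simp [model2, vec]; omega))⟩

theorem CGMor.ext_of_onE {m : ℕ × ℕ} (hm : m ≠ 0) {f f' : CGMor (model2 m) E}
    (hE : ∀ e, f.onE e = f'.onE e) : f = f' := by
  refine CGMor.ext (fun z => ?_) hE
  obtain ⟨e, rfl | rfl⟩ := model2_exists_edge_adjacent hm z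
  · rw [← f.map_r, ← f'.map_r, hE]
  · rw [← f.map_s, ← f'.map_s, hE]

theorem vec_ne_zero (i : Bool) : vec i ≠ 0 := by
  cases i <;> decide

theorem vec_le_one_one (i : Bool) : vec i ≤ (1, 1) := by
  cases i <;> decide

theorem vec_not_add_vec (i : Bool) : vec (!i) + vec i = (1, 1) := by
  cases i <;> rfl

theorem exists_nsmul_vec_add_nsmul_vec (i : Bool) (p : ℕ × ℕ) :
    ∃ a h : ℕ, a • vec i + h • vec (!i) = p := by
  cases i
  · exact ⟨p.1, p.2, by simp [vec]⟩
  · exact ⟨p.2, p.1, by simp [vec]⟩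

@[elab_as_elim]
theorem Prod.nat_induction_add_vec {motive : ℕ × ℕ → Prop} (zero : motive 0)
    (add_vec : ∀ n i, motive n → motive (n + vec i)) (n : ℕ × ℕ) : motive n := by
  obtain ⟨a, b⟩ := n
  induction b with
  | zero =>
    induction a with
    | zero => exact zero
    | succ a ih => exact add_vec (a, 0) false ih
  | succ b ih => exact add_vec (a, b) true ih

theorem tsub_add_le_of_le_add {α : Type*} [AddCommSemigroup α] [PartialOrder α]
    [ExistsAddOfLE α] [AddLeftMono α] [Sub α] [OrderedSub α] [AddLeftReflectLE α] {a b c d : α}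
    (hba : b ≤ a) (h : a + c ≤ b + d) : a - b + c ≤ d := by
  rw [tsub_add_eq_add_tsub hba]
  exact tsub_le_iff_left.mpr h

theorem model2_vec_edge_eq {i : Bool} (e : (model2 (vec i)).Edge) :
    e = ⟨((0, 0), i), (zero_add (vec i)).le⟩ := by
  obtain ⟨⟨⟨a, b⟩, c⟩, h⟩ := e
  apply Subtype.ext
  cases i <;> cases c <;> simp [vec] at h ⊢ <;> omega

theorem CGMor.ext_of_vec {i : Bool} {f f' : CGMor (model2 (vec i)) E}
    (h : f.onE ⟨((0, 0), i), (zero_add (vec i)).le⟩ =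
      f'.onE ⟨((0, 0), i), (zero_add (vec i)).le⟩) : f = f' :=
  CGMor.ext_of_onE (vec_ne_zero i) fun e => by rw [model2_vec_edge_eq e, h]

def CGMor.ofEdge (g : E.Edge) {i : Bool} (hg : E.c g = i) : CGMor (model2 (vec i)) E where
  onV z := if z.1 = 0 then E.r g else E.s g
  onE _ := g
  map_r e := by
    obtain rfl := model2_vec_edge_eq e
    simp [model2]
  map_s e := by
    obtain rfl := model2_vec_edge_eq e
    simp [model2, vec_ne_zero]
  map_c e := by
    obtain rfl := model2_vec_edge_eq e
    exact hg

/-- The boxes `[0, p]` and `[s, M]` together contain every vertex (`u = 0`), every edge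
(`u = eᵢ`) and every unit square (`u = e₁ + e₂`) of `E_{2,M}`. -/
def SplitsCells (M p s : ℕ × ℕ) : Prop :=
  ∀ z u : ℕ × ℕ, u ≤ (1, 1) → z + u ≤ M → z + u ≤ p ∨ s ≤ z

theorem splitsCells_column (i : Bool) (h : ℕ) :
    SplitsCells ((h + 1) • vec (!i)) (h • vec (!i)) (h • vec (!i)) := by
  rintro ⟨z₁, z₂⟩ ⟨u₁, u₂⟩ hu hz
  cases i <;> simp [vec, Prod.le_def] at hu hz ⊢ <;> omega

theorem splitsCells_strip (i : Bool) (h : ℕ) :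
    SplitsCells ((h + 1) • vec (!i) + vec i) (h • vec (!i) + vec i) (h • vec (!i)) := by
  rintro ⟨z₁, z₂⟩ ⟨u₁, u₂⟩ hu hz
  cases i <;> simp [vec, Prod.le_def] at hu hz ⊢ <;> omega

theorem splitsCells_append (i : Bool) (a h : ℕ) :
    SplitsCells (a • vec i + h • vec (!i) + vec i) (a • vec i + h • vec (!i)) (a • vec i) := by
  rintro ⟨z₁, z₂⟩ ⟨u₁, u₂⟩ hu hz
  cases i <;> simp [vec, Prod.le_def] at hu hz ⊢ <;> omega

theorem CGMor.eq_of_splitsCells {M p s q : ℕ × ℕ} (hcov : SplitsCells M p s) (hp : p ≤ M)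
    (hM : s + q = M) {Λ Λ' : CGMor (model2 M) E} (h₁ : restrict2 Λ p hp = restrict2 Λ' p hp)
    (h₂ : starRestrict2 Λ s q hM.le = starRestrict2 Λ' s q hM.le) : Λ = Λ' := by
  ext ⟨z, hz⟩
  · rcases hcov z 0 (zero_le2 _) (by simpa using hz) with hzp | hsz
    · exact congrArg (fun f => f.onV ⟨z, by simpa using hzp⟩) h₁
    · have hq : z - s ≤ q := tsub_le_iff_left.mpr (hM ▸ hz)
      have := congrArg (fun f => f.onV ⟨z - s, hq⟩) h₂
      rwa [Λ.starRestrict2_onV_tsub _ hsz _ hz, Λ'.starRestrict2_onV_tsub _ hsz _ hz] at this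
  · obtain ⟨z, b⟩ := z
    rcases hcov z (vec b) (vec_le_one_one b) hz with hzp | hsz
    · exact congrArg (fun f => f.onE ⟨(z, b), hzp⟩) h₁
    · have hq : z - s + vec b ≤ q := tsub_add_le_of_le_add hsz (hM ▸ hz)
      have := congrArg (fun f => f.onE ⟨(z - s, b), hq⟩) h₂
      rwa [Λ.starRestrict2_onE_tsub _ hsz _ hz, Λ'.starRestrict2_onE_tsub _ hsz _ hz] at this

theorem occurs2_starRestrict2 {m b : ℕ × ℕ} (lam : CGMor (model2 m) E) (h : b + (1, 1) ≤ m) :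
    Occurs2 (starRestrict2 lam b (1, 1) h) lam :=
  ⟨b, h, fun _ => lam.onV_congr (add_comm _ _) _ _,
    fun _ => lam.onE_congr (add_comm _ _) rfl _ _⟩

theorem Compatible2.restrict {q : ℕ × ℕ} {lam : CGMor (model2 q) E} (h : Compatible2 C lam)
    (p : ℕ × ℕ) (hpq : p ≤ q) : Compatible2 C (restrict2 lam p hpq) := by
  rintro φ ⟨b, hb, hv, he⟩
  exact h φ ⟨b, hb.trans hpq, hv, he⟩

theorem Compatible2.starRestrict {m : ℕ × ℕ} {lam : CGMor (model2 m) E} (h : Compatible2 C lam)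
    (p n : ℕ × ℕ) (hpn : p + n ≤ m) : Compatible2 C (starRestrict2 lam p n hpn) := by
  rintro φ ⟨b, hb, hv, he⟩
  refine h φ ⟨p + b, (add_assoc p b _ ▸ add_le_add_right hb p).trans hpn, fun z => ?_, fun e => ?_⟩
  · rw [← hv z]
    exact lam.onV_congr (add_left_comm _ _ _) _ _
  · rw [← he e]
    exact lam.onE_congr (add_left_comm _ _ _) rfl _ _

theorem Compatible2.of_mem {φ : Square2 E} (h : φ ∈ C) : Compatible2 C φ := by
  rintro ψ ⟨b, hb, hv, he⟩
  obtain rfl : b = 0 := by simpa using hb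
  convert h using 1
  refine CGMor.ext (fun z => ?_) (fun e => ?_)
  · exact (hv z).symm.trans (φ.onV_congr (add_zero _) _ _)
  · exact (he e).symm.trans (φ.onE_congr (add_zero _) rfl _ _)

theorem compatible2_of_not_le {m : ℕ × ℕ} (hm : ¬(1, 1) ≤ m) (lam : CGMor (model2 m) E) :
    Compatible2 C lam := by
  rintro φ ⟨b, hb, -, -⟩
  exact absurd (le_add_self.trans hb) hm

theorem Compatible2.of_splitsCells {M p s q : ℕ × ℕ} (hcov : SplitsCells M p s) (hp : p ≤ M)
    (hM : s + q = M) {Λ : CGMor (model2 M) E} (h₁ : Compatible2 C (restrict2 Λ p hp))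
    (h₂ : Compatible2 C (starRestrict2 Λ s q hM.le)) : Compatible2 C Λ := by
  rintro φ ⟨b, hb, hv, he⟩
  rcases hcov b (1, 1) le_rfl hb with hbp | hsb
  · exact h₁ φ ⟨b, hbp, hv, he⟩
  · have hshift (z : ℕ × ℕ) : s + (z + (b - s)) = z + b := by
      rw [add_left_comm, add_tsub_cancel_of_le hsb]
    refine h₂ φ ⟨b - s, tsub_add_le_of_le_add hsb (hM ▸ hb), fun z => ?_, fun e => ?_⟩
    · rw [← hv z]
      exact Λ.onV_congr (hshift _) _ _
    · rw [← he e]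
      exact Λ.onE_congr (hshift _) rfl _ _

theorem IsComplete2.existsUnique_square (hC : IsComplete2 E C) {j : Bool} {x₁ x₂ : E.Edge}
    (hsr : E.s x₁ = E.r x₂) (h₁ : E.c x₁ = j) (h₂ : E.c x₂ = !j) :
    ∃! φ : Square2 E, φ ∈ C ∧ φ.onE (sqEdge0 j) = x₁ ∧ φ.onE (sqEdge1 j) = x₂ := by
  subst h₁
  obtain ⟨φ, ⟨hφ, e₁, e₂⟩, huniq⟩ := hC x₁ x₂ hsr (by simp [h₂])
  exact ⟨φ, ⟨hφ, e₁.symm, e₂.symm⟩, fun ψ ⟨hψ, f₁, f₂⟩ => huniq ψ ⟨hψ, f₁.symm, f₂.symm⟩⟩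

section Glue

variable {p s t q M : ℕ × ℕ}

def glueV (hM : s + q = M) (lam : CGMor (model2 p) E) (σ : CGMor (model2 q) E)
    (z : (model2 M).V) : E.V :=
  if hz : z.1 ≤ p then lam.onV ⟨z.1, hz⟩
  else σ.onV ⟨z.1 - s, tsub_le_iff_left.mpr (hM ▸ z.2)⟩

def glueE (hcov : SplitsCells M p s) (hM : s + q = M) (lam : CGMor (model2 p) E)
    (σ : CGMor (model2 q) E) (e : (model2 M).Edge) : E.Edge :=
  if he : e.1.1 + vec e.1.2 ≤ p then lam.onE ⟨e.1, he⟩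
  else σ.onE ⟨(e.1.1 - s, e.1.2), tsub_add_le_of_le_add
    ((hcov _ _ (vec_le_one_one _) e.2).resolve_left he) (hM ▸ e.2)⟩

theorem glueV_of_le (hM : s + q = M) (lam : CGMor (model2 p) E) (σ : CGMor (model2 q) E)
    {z : ℕ × ℕ} (hzM : z ≤ M) (hz : z ≤ p) :
    glueV hM lam σ ⟨z, hzM⟩ = lam.onV ⟨z, hz⟩ :=
  dif_pos hz

theorem glueE_of_le (hcov : SplitsCells M p s) (hM : s + q = M) (lam : CGMor (model2 p) E)
    (σ : CGMor (model2 q) E) {z : ℕ × ℕ} {b : Bool} (hzM : z + vec b ≤ M) (hz : z + vec b ≤ p) :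
    glueE hcov hM lam σ ⟨(z, b), hzM⟩ = lam.onE ⟨(z, b), hz⟩ :=
  dif_pos hz

theorem glueV_of_ge (hp : s + t = p) (hM : s + q = M) (ht : t ≤ q) {lam : CGMor (model2 p) E}
    {σ : CGMor (model2 q) E} (hseam : starRestrict2 lam s t hp.le = restrict2 σ t ht)
    {z : ℕ × ℕ} (hzM : z ≤ M) (hs : s ≤ z) :
    glueV hM lam σ ⟨z, hzM⟩ = σ.onV ⟨z - s, tsub_le_iff_left.mpr (hM ▸ hzM)⟩ := by
  by_cases hz : z ≤ p
  · have hzt : z - s ≤ t := tsub_le_iff_left.mpr (hp ▸ hz)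
    rw [glueV_of_le hM lam σ hzM hz, ← lam.starRestrict2_onV_tsub hp.le hs hzt hz]
    exact congrArg (fun f => f.onV ⟨z - s, hzt⟩) hseam
  · exact dif_neg hz

theorem glueE_of_ge (hcov : SplitsCells M p s) (hp : s + t = p) (hM : s + q = M) (ht : t ≤ q)
    {lam : CGMor (model2 p) E} {σ : CGMor (model2 q) E}
    (hseam : starRestrict2 lam s t hp.le = restrict2 σ t ht) {z : ℕ × ℕ} {b : Bool}
    (hzM : z + vec b ≤ M) (hs : s ≤ z) :
    glueE hcov hM lam σ ⟨(z, b), hzM⟩ =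
      σ.onE ⟨(z - s, b), tsub_add_le_of_le_add hs (hM ▸ hzM)⟩ := by
  by_cases hz : z + vec b ≤ p
  · have hzt : z - s + vec b ≤ t := tsub_add_le_of_le_add hs (hp ▸ hz)
    rw [glueE_of_le hcov hM lam σ hzM hz, ← lam.starRestrict2_onE_tsub hp.le hs hzt hz]
    exact congrArg (fun f => f.onE ⟨(z - s, b), hzt⟩) hseam
  · exact dif_neg hz

/-- `lam` on `[0, p]` and `σ` translated to `[s, M]`, which agree on the overlap `s + [0, t]`. -/
def glue (hcov : SplitsCells M p s) (hp : s + t = p) (hM : s + q = M) (ht : t ≤ q)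
    {lam : CGMor (model2 p) E} {σ : CGMor (model2 q) E}
    (hseam : starRestrict2 lam s t hp.le = restrict2 σ t ht) : CGMor (model2 M) E where
  onV := glueV hM lam σ
  onE := glueE hcov hM lam σ
  map_r := by
    rintro ⟨⟨z, b⟩, hzM⟩
    by_cases hz : z + vec b ≤ p
    · refine (congrArg E.r (glueE_of_le hcov hM lam σ hzM hz)).trans ((lam.map_r _).trans ?_)
      exact (glueV_of_le hM lam σ _ ((le_add_vec z b).trans hz)).symm
    · have hs : s ≤ z := (hcov _ _ (vec_le_one_one b) hzM).resolve_left hz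
      refine (congrArg E.r (glueE_of_ge hcov hp hM ht hseam hzM hs)).trans ((σ.map_r _).trans ?_)
      exact (glueV_of_ge hp hM ht hseam _ hs).symm
  map_s := by
    rintro ⟨⟨z, b⟩, hzM⟩
    by_cases hz : z + vec b ≤ p
    · refine (congrArg E.s (glueE_of_le hcov hM lam σ hzM hz)).trans ((lam.map_s _).trans ?_)
      exact (glueV_of_le hM lam σ hzM hz).symm
    · have hs : s ≤ z := (hcov _ _ (vec_le_one_one b) hzM).resolve_left hz
      refine (congrArg E.s (glueE_of_ge hcov hp hM ht hseam hzM hs)).trans ((σ.map_s _).trans ?_)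
      refine (σ.onV_congr (tsub_add_eq_add_tsub hs) _ ?_).trans
        (glueV_of_ge hp hM ht hseam hzM (hs.trans (le_add_vec z b))).symm
      exact tsub_le_iff_left.mpr (hM ▸ hzM)
  map_c := by
    rintro ⟨⟨z, b⟩, hzM⟩
    unfold glueE
    split_ifs
    exacts [lam.map_c _, σ.map_c _]

theorem exists_glue (hcov : SplitsCells M p s) (hp : s + t = p) (hM : s + q = M) (ht : t ≤ q)
    (hpM : p ≤ M) {lam : CGMor (model2 p) E} {σ : CGMor (model2 q) E}
    (hseam : starRestrict2 lam s t hp.le = restrict2 σ t ht) :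
    ∃ Λ : CGMor (model2 M) E, restrict2 Λ p hpM = lam ∧ starRestrict2 Λ s q hM.le = σ := by
  refine ⟨glue hcov hp hM ht hseam, ?_, ?_⟩
  · refine CGMor.ext (fun z => ?_) (fun e => ?_)
    · exact glueV_of_le hM lam σ _ z.2
    · exact glueE_of_le hcov hM lam σ _ e.2
  · refine CGMor.ext (fun z => ?_) (fun e => ?_)
    · refine (glueV_of_ge hp hM ht hseam _ le_self_add).trans (σ.onV_congr ?_ _ _)
      exact add_tsub_cancel_left _ _
    · refine (glueE_of_ge hcov hp hM ht hseam _ le_self_add).trans (σ.onE_congr ?_ rfl _ _)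
      exact add_tsub_cancel_left _ _

end Glue

variable (C) in
def IsEdgeExtension {i : Bool} {p M : ℕ × ℕ} (lam : CGMor (model2 p) E) (g : E.Edge)
    (hM : p + vec i = M) (Λ : CGMor (model2 M) E) : Prop :=
  Compatible2 C Λ ∧ restrict2 Λ p ((le_add_vec p i).trans hM.le) = lam ∧
    Λ.onE ⟨(p, i), hM.le⟩ = g

theorem existsUnique_edgeExtension_zero {i : Bool} {M : ℕ × ℕ} (hM : 0 + vec i = M)
    (γ : CGMor (model2 0) E) {g : E.Edge} (hgc : E.c g = i) (hgr : E.r g = γ.onV ⟨0, le_rfl⟩) :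
    ∃! Λ, IsEdgeExtension C γ g hM Λ := by
  obtain rfl : M = vec i := by rw [← hM, zero_add]
  refine ⟨CGMor.ofEdge g hgc, ⟨compatible2_of_not_le (by cases i <;> decide) _, ?_, rfl⟩, ?_⟩
  · refine CGMor.ext (fun z => ?_) (fun e => (model2_zero_no_edge e).elim)
    obtain ⟨z, hz⟩ := z
    obtain rfl : z = 0 := le_antisymm hz (zero_le2 z)
    exact hgr
  · rintro Λ ⟨-, -, he⟩
    exact CGMor.ext_of_vec he

theorem IsEdgeExtension.topSquare {i : Bool} {p' p M : ℕ × ℕ} (hp : p' + vec (!i) = p)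
    (hM : p + vec i = M) (hsq : p' + (1, 1) ≤ M) {γ : CGMor (model2 p) E} {g : E.Edge}
    {Λ : CGMor (model2 M) E} (h : IsEdgeExtension C γ g hM Λ) :
    starRestrict2 Λ p' (1, 1) hsq ∈ C ∧
      (starRestrict2 Λ p' (1, 1) hsq).onE (sqEdge0 (!i)) = γ.onE ⟨(p', !i), hp.le⟩ ∧
      (starRestrict2 Λ p' (1, 1) hsq).onE (sqEdge1 (!i)) = g := by
  obtain ⟨hΛ, hr, he⟩ := h
  refine ⟨hΛ _ (occurs2_starRestrict2 Λ hsq), ?_, (Λ.onE_congr hp (Bool.not_not i) _ _).trans he⟩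
  exact (congrArg (fun f => f.onE ⟨(p' + 0, !i), by simpa using hp.le⟩) hr).trans
    (γ.onE_congr (add_zero p') rfl _ _)

/-- The top square is the square of `C` on the path (top edge of `γ`, `g`); below it, the strip
extends the shorter column by the bottom edge of that square. -/
theorem existsUnique_edgeExtension_of_column {i : Bool} (hC : IsComplete2 E C) {p' p M : ℕ × ℕ}
    (hp : p' + vec (!i) = p) (hM : p + vec i = M) (hcol : SplitsCells p p' p')
    (hstrip : SplitsCells M (p' + vec i) p')
    (ih : ∀ (γ' : CGMor (model2 p') E) (g' : E.Edge), E.c g' = i →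
      E.r g' = γ'.onV ⟨p', le_rfl⟩ → ∃! Λ', IsEdgeExtension C γ' g' (rfl : p' + vec i = _) Λ')
    (γ : CGMor (model2 p) E) {g : E.Edge} (hgc : E.c g = i) (hgr : E.r g = γ.onV ⟨p, le_rfl⟩) :
    ∃! Λ, IsEdgeExtension C γ g hM Λ := by
  have hp'p : p' ≤ p := hp ▸ le_add_vec p' (!i)
  have hsq : p' + (1, 1) = M := by rw [← hM, ← hp, add_assoc, vec_not_add_vec]
  have hpM : p' + vec i ≤ M := hsq ▸ add_le_add_right (vec_le_one_one i) p'
  obtain ⟨φ, ⟨hφC, hφ₀, hφ₁⟩, hφu⟩ := hC.existsUnique_square (j := !i)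
    ((γ.map_s ⟨(p', !i), hp.le⟩).trans ((γ.onV_congr hp _ _).trans hgr.symm)) (γ.map_c _)
    (by simp [hgc])
  have hgr' : E.r (φ.onE (sqEdge0 i)) = (restrict2 γ p' hp'p).onV ⟨p', le_rfl⟩ :=
    (φ.map_r _).trans ((φ.map_r (sqEdge0 (!i))).symm.trans ((congrArg E.r hφ₀).trans (γ.map_r _)))
  obtain ⟨σ, ⟨hσC, hσr, hσe⟩, hσu⟩ := ih _ _ (φ.map_c _) hgr'
  have hseam : starRestrict2 σ p' (vec i) le_rfl = restrict2 φ (vec i) (vec_le_one_one i) :=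
    CGMor.ext_of_vec ((σ.onE_congr (add_zero p') rfl _ _).trans hσe)
  obtain ⟨Λ, hΛσ, hΛφ⟩ := exists_glue hstrip rfl hsq (vec_le_one_one i) hpM hseam
  refine ⟨Λ, ⟨?_, ?_, ?_⟩, ?_⟩
  · refine Compatible2.of_splitsCells hstrip hpM hsq ?_ ?_
    · rw [hΛσ]; exact hσC
    · rw [hΛφ]; exact Compatible2.of_mem hφC
  · refine CGMor.eq_of_splitsCells hcol hp'p hp ?_ ?_
    · exact (congrArg (fun f => restrict2 f p' (le_add_vec p' i)) hΛσ).trans hσr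
    · exact CGMor.ext_of_vec ((congrArg (fun f => f.onE (sqEdge0 (!i))) hΛφ).trans
        (hφ₀.trans (γ.onE_congr (add_zero p').symm rfl _ _)))
  · exact (Λ.onE_congr hp.symm (Bool.not_not i).symm _ _).trans
      ((congrArg (fun f => f.onE (sqEdge1 (!i))) hΛφ).trans hφ₁)
  · intro Λ₂ hΛ₂
    have hψ : starRestrict2 Λ₂ p' (1, 1) hsq.le = φ := hφu _ (hΛ₂.topSquare hp hM hsq.le)
    obtain ⟨h₂C, h₂r, -⟩ := hΛ₂
    have hσ₂ : restrict2 Λ₂ (p' + vec i) hpM = σ := by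
      refine hσu _ ⟨h₂C.restrict _ _, ?_, ?_⟩
      · exact congrArg (fun f => restrict2 f p' hp'p) h₂r
      · exact (Λ₂.onE_congr (add_zero p').symm rfl _ _).trans
          (congrArg (fun f => f.onE (sqEdge0 i)) hψ)
    exact CGMor.eq_of_splitsCells hstrip hpM hsq (hσ₂.trans hΛσ.symm) (hψ.trans hΛφ.symm)

theorem existsUnique_edgeExtension_column (hC : IsComplete2 E C) (i : Bool) (h : ℕ) :
    ∀ {p M : ℕ × ℕ}, h • vec (!i) = p → ∀ (hM : p + vec i = M) (γ : CGMor (model2 p) E)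
      {g : E.Edge}, E.c g = i → E.r g = γ.onV ⟨p, le_rfl⟩ → ∃! Λ, IsEdgeExtension C γ g hM Λ := by
  induction h with
  | zero =>
    intro p M hp hM γ g hgc hgr
    obtain rfl : p = 0 := by simpa using hp.symm
    exact existsUnique_edgeExtension_zero hM γ hgc hgr
  | succ h ih =>
    rintro p M rfl rfl γ g hgc hgr
    exact existsUnique_edgeExtension_of_column hC (succ_nsmul _ _).symm rfl
      (splitsCells_column i h) (splitsCells_strip i h)
      (fun γ' _ hgc' hgr' => ih rfl rfl γ' hgc' hgr') γ hgc hgr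

theorem existsUnique_edgeExtension (hC : IsComplete2 E C) {i : Bool} {p M : ℕ × ℕ}
    (hM : p + vec i = M) {lam : CGMor (model2 p) E} (hlam : Compatible2 C lam) {g : E.Edge}
    (hgc : E.c g = i) (hgr : E.r g = lam.onV ⟨p, le_rfl⟩) :
    ∃! Λ, IsEdgeExtension C lam g hM Λ := by
  obtain ⟨a, h, rfl⟩ := exists_nsmul_vec_add_nsmul_vec i p
  subst hM
  have hcov := splitsCells_append i a h
  have hq : a • vec i + (h • vec (!i) + vec i) = a • vec i + h • vec (!i) + vec i :=
    (add_assoc _ _ _).symm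
  obtain ⟨σ, ⟨hσC, hσr, hσe⟩, hσu⟩ := existsUnique_edgeExtension_column hC i h rfl rfl
    (starRestrict2 lam (a • vec i) (h • vec (!i)) le_rfl) hgc hgr
  obtain ⟨Λ, hΛl, hΛσ⟩ := exists_glue hcov rfl hq (le_add_vec _ i) (le_add_vec _ i) hσr.symm
  refine ⟨Λ, ⟨?_, hΛl, ?_⟩, ?_⟩
  · refine Compatible2.of_splitsCells hcov (le_add_vec _ i) hq ?_ ?_
    · rw [hΛl]; exact hlam
    · rw [hΛσ]; exact hσC
  · exact (congrArg (fun f => f.onE ⟨(h • vec (!i), i), le_rfl⟩) hΛσ).trans hσe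
  · rintro Λ₂ ⟨h₂C, h₂l, h₂e⟩
    have h₂σ : starRestrict2 Λ₂ _ _ hq.le = σ := by
      refine hσu _ ⟨h₂C.starRestrict _ _ _, ?_, h₂e⟩
      exact congrArg (fun f => starRestrict2 f (a • vec i) (h • vec (!i)) le_rfl) h₂l
    exact CGMor.eq_of_splitsCells hcov _ hq (h₂l.trans hΛl.symm) (h₂σ.trans hΛσ.symm)

variable (C) in
def IsComposite {m n : ℕ × ℕ} (μ : CGMor (model2 m) E) (ν : CGMor (model2 n) E)
    (lam : CGMor (model2 (m + n)) E) : Prop :=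
  Compatible2 C lam ∧ restrict2 lam m (le_self_add2 m n) = μ ∧
    starRestrict2 lam m n (le_refl (m + n)) = ν

theorem existsUnique_isComposite_zero {m : ℕ × ℕ} {μ : CGMor (model2 m) E}
    (hμ : Compatible2 C μ) (ν : CGMor (model2 0) E)
    (hsr : μ.onV ⟨m, le_rfl⟩ = ν.onV ⟨0, zero_le2 0⟩) :
    ∃! lam, IsComposite C μ ν lam := by
  refine ⟨μ, ⟨hμ, rfl, ?_⟩, fun Λ hΛ => ?_⟩
  · refine CGMor.ext (fun z => ?_) (fun e => (model2_zero_no_edge e).elim)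
    obtain ⟨z, hz⟩ := z
    obtain rfl : z = 0 := le_antisymm hz (zero_le2 z)
    exact (μ.onV_congr (add_zero m) _ _).trans hsr
  · exact CGMor.ext (fun z => congrArg (fun f => f.onV z) hΛ.2.1)
      (fun e => congrArg (fun f => f.onE e) hΛ.2.1)

theorem existsUnique_isComposite_add_vec (hC : IsComplete2 E C) {m n : ℕ × ℕ}
    {μ : CGMor (model2 m) E} {i : Bool}
    (ih : ∀ ν' : CGMor (model2 n) E, Compatible2 C ν' →
      μ.onV ⟨m, le_rfl⟩ = ν'.onV ⟨0, zero_le2 n⟩ → ∃! lam, IsComposite C μ ν' lam)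
    (ν : CGMor (model2 (n + vec i)) E) (hν : Compatible2 C ν)
    (hsr : μ.onV ⟨m, le_rfl⟩ = ν.onV ⟨0, zero_le2 _⟩) :
    ∃! lam, IsComposite C μ ν lam := by
  set ν' := restrict2 ν n (le_add_vec n i)
  set g := ν.onE ⟨(n, i), le_rfl⟩
  obtain ⟨lam', ⟨hl'C, hl'μ, hl'ν⟩, hl'u⟩ := ih ν' (hν.restrict _ _) hsr
  have hgc : E.c g = i := ν.map_c _
  have hgr : E.r g = lam'.onV ⟨m + n, le_rfl⟩ :=
    (ν.map_r _).trans (congrArg (fun f => f.onV ⟨n, le_rfl⟩) hl'ν).symm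
  obtain ⟨Λ, ⟨hΛC, hΛr, hΛe⟩, hΛu⟩ :=
    existsUnique_edgeExtension hC (add_assoc m n (vec i)) hl'C hgc hgr
  have hν_ext := existsUnique_edgeExtension hC rfl (hν.restrict n (le_add_vec n i)) hgc (ν.map_r _)
  refine ⟨Λ, ⟨hΛC, ?_, ?_⟩, ?_⟩
  · exact (congrArg (fun f => restrict2 f m (le_self_add2 m n)) hΛr).trans hl'μ
  · refine hν_ext.unique ⟨hΛC.starRestrict _ _ _, ?_, hΛe⟩ ⟨hν, rfl, rfl⟩
    exact (congrArg (fun f => starRestrict2 f m n le_rfl) hΛr).trans hl'ν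
  · rintro Λ₂ ⟨h₂C, h₂μ, h₂ν⟩
    refine hΛu Λ₂ ⟨h₂C, hl'u _ ⟨h₂C.restrict _ _, h₂μ, ?_⟩, ?_⟩
    · exact congrArg (fun f => restrict2 f n (le_add_vec n i)) h₂ν
    · exact congrArg (fun f => f.onE ⟨(n, i), le_rfl⟩) h₂ν

end

theorem unique_composition_2 (E : TwoColouredGraph) (C : Set (Square2 E))
    (hC : IsComplete2 E C) (m n : ℕ × ℕ)
    (μ : CGMor (model2 m) E) (ν : CGMor (model2 n) E)
    (hμ : Compatible2 C μ) (hν : Compatible2 C ν)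
    (hsr : μ.onV ⟨m, le_refl m⟩ = ν.onV ⟨0, zero_le2 n⟩) :
    ∃! lam : CGMor (model2 (m + n)) E,
      Compatible2 C lam ∧ restrict2 lam m (le_self_add2 m n) = μ ∧
        starRestrict2 lam m n (le_refl (m + n)) = ν := by
  induction n using Prod.nat_induction_add_vec with
  | zero => exact existsUnique_isComposite_zero hμ ν hsr
  | add_vec n i ih => exact existsUnique_isComposite_add_vec hC ih ν hν hsr
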